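/- arXiv:2111.07304 — 3 statements merged into one kernel-verified Lean document; each statement's English description precedes it below -/
import Mathlib

section
/- A lattice triangle is primitive if and only if it has area 1/2, in the following direction: if a, b, c are three affinely independent points of ℤ² ⊆ ℝ² and the closed triangle conv{a,b,c} contains no integer lattice point other than a, b and c, then the two-dimensional Lebesgue measure of conv{a,b,c} equals 1/2. -/
/-!
Put `u = b - a` and `v = c - a`. The triangle is the image of the standard triangle
`{s, t ≥ 0, s + t ≤ 1}` under `(s, t) ↦ a + s • u + t • v`, so its area is `|cross u v| / 2`,
where `cross u v` is the determinant with columns `u` and `v`. If `cross u v ≠ ±1`, then `u`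
and `v` do not span `ℤ²`; reducing a lattice point outside their span modulo `ℤ u + ℤ v` gives
a lattice point `s • u + t • v ≠ 0` with `s, t ∈ [0, 1)`. Either it or its mirror image
`u + v - (s • u + t • v)`, translated by `a`, is a lattice point of the triangle other than its
vertices.
-/

open MeasureTheory

/-- A point of `ℝ × ℝ` is an integer lattice point if both coordinates are integers. -/
def IsLatticePoint (p : ℝ × ℝ) : Prop := ∃ a b : ℤ, p = ((a : ℝ), (b : ℝ))

/-- The embedding of `ℤ × ℤ` into `ℝ × ℝ`. -/
def latticeEmbed (p : ℤ × ℤ) : ℝ × ℝ := ((p.1 : ℝ), (p.2 : ℝ))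

open scoped Pointwise

def cross {R : Type*} [CommRing R] (u v : R × R) : R := u.1 * v.2 - u.2 * v.1

section Cross

variable {R : Type*} [CommRing R]

/-- Cramer's rule. -/
theorem cross_smul (u v w : R × R) : cross u v • w = cross w v • u + cross u w • v := by
  ext <;> simp only [cross, Prod.smul_fst, Prod.smul_snd, Prod.fst_add, Prod.snd_add,
    smul_eq_mul] <;> ring

theorem cross_smul_add_smul (a b c d : R) (u v : R × R) :
    cross (a • u + b • v) (c • u + d • v) = cross u v * (a * d - b * c) := by
  simp only [cross, Prod.smul_fst, Prod.smul_snd, Prod.fst_add, Prod.snd_add, smul_eq_mul]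
  ring

theorem isUnit_cross_of_span_eq_top {u v : R × R} (h : Submodule.span R {u, v} = ⊤) :
    IsUnit (cross u v) := by
  obtain ⟨a, b, hab⟩ := Submodule.mem_span_pair.1 (h ▸ Submodule.mem_top : ((1, 0) : R × R) ∈ _)
  obtain ⟨c, d, hcd⟩ := Submodule.mem_span_pair.1 (h ▸ Submodule.mem_top : ((0, 1) : R × R) ∈ _)
  refine IsUnit.of_mul_eq_one (a * d - b * c) ?_
  rw [← cross_smul_add_smul, hab, hcd]
  simp [cross]

theorem cross_ne_zero_of_linearIndependent [Nontrivial R] {u v : R × R}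
    (h : LinearIndependent R ![u, v]) : cross u v ≠ 0 := by
  intro h0
  rw [cross] at h0
  have h₂ := LinearIndependent.pair_iff.1 h v.2 (-u.2) <| Prod.ext
    (show v.2 * u.1 + -u.2 * v.1 = 0 by linear_combination h0)
    (show v.2 * u.2 + -u.2 * v.2 = 0 by ring)
  have h₁ := LinearIndependent.pair_iff.1 h (-v.1) u.1 <| Prod.ext
    (show -v.1 * u.1 + u.1 * v.1 = 0 by ring)
    (show -v.1 * u.2 + u.1 * v.2 = 0 by linear_combination h0)
  exact h.ne_zero 0 (Prod.ext (by simpa using h₁.2) (by simpa using h₂.2))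

end Cross

theorem AffineIndependent.linearIndependent_sub {k E : Type*} [CommRing k] [AddCommGroup E]
    [Module k E] {A B C : E} (h : AffineIndependent k ![A, B, C]) :
    LinearIndependent k ![B - A, C - A] := by
  refine LinearIndependent.pair_iff.2 fun s t hst => ?_
  have hw := h.eq_zero_of_sum_eq_zero (s := Finset.univ) (w := ![-(s + t), s, t])
    (by simp [Fin.sum_univ_three]) (by
      simp only [Fin.sum_univ_three, Matrix.cons_val_zero, Matrix.cons_val_one,
        Matrix.cons_val_two, Matrix.head_cons, Matrix.tail_cons]
      rw [← hst]; module)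
  exact ⟨hw 1 (Finset.mem_univ _), hw 2 (Finset.mem_univ _)⟩

def pairCombination (R : Type*) {E : Type*} [Semiring R] [AddCommMonoid E] [Module R E]
    (u v : E) : R × R →ₗ[R] E :=
  (LinearMap.toSpanSingleton R E u).coprod (LinearMap.toSpanSingleton R E v)

section PairCombination

variable {R E : Type*} [Ring R] [AddCommGroup E] [Module R E]

@[simp]
theorem pairCombination_apply (u v : E) (p : R × R) :
    pairCombination R u v p = p.1 • u + p.2 • v :=
  rfl

theorem pairCombination_injective {u v : E} (h : LinearIndependent R ![u, v]) :
    Function.Injective (pairCombination R u v) := by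
  refine (injective_iff_map_eq_zero _).2 fun p hp => ?_
  obtain ⟨h₁, h₂⟩ := LinearIndependent.pair_iff.1 h p.1 p.2 hp
  exact Prod.ext h₁ h₂

theorem vadd_image_pairCombination_vertices (A u v : E) :
    A +ᵥ pairCombination R u v '' {0, (1, 0), (0, 1)} = {A, A + u, A + v} := by
  simp [Set.image_insert_eq, Set.vadd_set_insert]

end PairCombination

def stdTriangle : Set (ℝ × ℝ) := {p | 0 ≤ p.1 ∧ 0 ≤ p.2 ∧ p.1 + p.2 ≤ 1}

theorem convex_stdTriangle : Convex ℝ stdTriangle := by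
  rintro p ⟨hp₁, hp₂, hp⟩ q ⟨hq₁, hq₂, hq⟩ a b ha hb hab
  refine ⟨?_, ?_, ?_⟩ <;>
    simp only [Prod.fst_add, Prod.snd_add, Prod.smul_fst, Prod.smul_snd, smul_eq_mul] <;>
    nlinarith

theorem convexHull_eq_stdTriangle : convexHull ℝ {0, (1, 0), (0, 1)} = stdTriangle := by
  refine (convexHull_min ?_ convex_stdTriangle).antisymm fun p ⟨h₁, h₂, h⟩ => ?_
  · rintro p (rfl | rfl | rfl) <;> norm_num [stdTriangle]
  refine mem_convexHull_of_exists_fintype ![1 - p.1 - p.2, p.1, p.2] ![0, (1, 0), (0, 1)]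
    ?_ ?_ ?_ ?_
  · intro i; fin_cases i <;> simp [h₁, h₂, h, sub_sub]
  · simp [Fin.sum_univ_three, sub_sub, add_assoc]
  · intro i; fin_cases i <;> simp
  · ext <;> simp [Fin.sum_univ_three]

theorem volume_stdTriangle : volume stdTriangle = ENNReal.ofReal (1 / 2) := by
  have hmeas : MeasurableSet stdTriangle := by
    unfold stdTriangle; measurability
  have slice (x : ℝ) : volume (Prod.mk x ⁻¹' stdTriangle) =
      (Set.Icc 0 1).indicator (fun x => ENNReal.ofReal (1 - x)) x := by
    by_cases hx : x ∈ Set.Icc (0 : ℝ) 1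
    · have : Prod.mk x ⁻¹' stdTriangle = Set.Icc 0 (1 - x) := by
        ext y
        simp only [stdTriangle, Set.mem_preimage, Set.mem_ofPred_eq, Set.mem_Icc, hx.1, true_and]
        constructor <;> rintro ⟨h, h'⟩ <;> constructor <;> linarith
      simp [this, hx]
    · have : Prod.mk x ⁻¹' stdTriangle = ∅ := by
        refine Set.eq_empty_of_forall_notMem fun y ⟨h₁, h₂, h⟩ => hx ⟨h₁, ?_⟩
        simp only at h₂ h; linarith
      simp [this, hx]
  rw [Measure.volume_eq_prod, Measure.prod_apply hmeas]
  simp_rw [slice]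
  rw [lintegral_indicator measurableSet_Icc, ← ofReal_integral_eq_lintegral_ofReal]
  · rw [integral_Icc_eq_integral_Ioc, ← intervalIntegral.integral_of_le zero_le_one,
      intervalIntegral.integral_sub intervalIntegrable_const intervalIntegral.intervalIntegrable_id]
    norm_num
  · exact (continuous_const.sub continuous_id).integrableOn_Icc
  · filter_upwards [ae_restrict_mem measurableSet_Icc] with x hx
    simp [hx.2]

theorem convexHull_triangle_eq {E : Type*} [AddCommGroup E] [Module ℝ E] (A u v : E) :
    convexHull ℝ {A, A + u, A + v} = A +ᵥ pairCombination ℝ u v '' stdTriangle := by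
  rw [← convexHull_eq_stdTriangle, LinearMap.image_convexHull, ← convexHull_vadd,
    vadd_image_pairCombination_vertices]

theorem det_pairCombination (u v : ℝ × ℝ) :
    LinearMap.det (pairCombination ℝ u v) = cross u v := by
  rw [← LinearMap.det_toMatrix (Module.Basis.finTwoProd ℝ), Matrix.det_fin_two]
  simp [LinearMap.toMatrix_apply, cross, mul_comm]

theorem volume_convexHull_triangle (A u v : ℝ × ℝ) :
    volume (convexHull ℝ {A, A + u, A + v}) = ENNReal.ofReal (|cross u v| / 2) := by
  rw [convexHull_triangle_eq, measure_vadd, Measure.addHaar_image_linearMap,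
    det_pairCombination, volume_stdTriangle, ← ENNReal.ofReal_mul (abs_nonneg _)]
  ring_nf

theorem isLatticePoint_latticeEmbed (z : ℤ × ℤ) : IsLatticePoint (latticeEmbed z) :=
  ⟨z.1, z.2, rfl⟩

theorem latticeEmbed_add (p q : ℤ × ℤ) :
    latticeEmbed (p + q) = latticeEmbed p + latticeEmbed q := by
  ext <;> simp [latticeEmbed]

theorem latticeEmbed_sub (p q : ℤ × ℤ) :
    latticeEmbed (p - q) = latticeEmbed p - latticeEmbed q := by
  ext <;> simp [latticeEmbed]

theorem latticeEmbed_zsmul (m : ℤ) (p : ℤ × ℤ) :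
    latticeEmbed (m • p) = (m : ℝ) • latticeEmbed p := by
  ext <;> simp [latticeEmbed]

theorem latticeEmbed_eq_zero {p : ℤ × ℤ} : latticeEmbed p = 0 ↔ p = 0 := by
  simp [latticeEmbed, Prod.ext_iff]

theorem cross_latticeEmbed (u v : ℤ × ℤ) :
    cross (latticeEmbed u) (latticeEmbed v) = ((cross u v : ℤ) : ℝ) := by
  simp [cross, latticeEmbed]

theorem exists_latticeEmbed_eq_fract_smul_add_fract_smul {u v w : ℤ × ℤ} (hd : cross u v ≠ 0)
    (hw : w ∉ Submodule.span ℤ {u, v}) :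
    ∃ z : ℤ × ℤ, ∃ s t : ℝ, s ∈ Set.Ico 0 1 ∧ t ∈ Set.Ico 0 1 ∧ (s ≠ 0 ∨ t ≠ 0) ∧
      latticeEmbed z = s • latticeEmbed u + t • latticeEmbed v := by
  set x : ℝ := (cross w v : ℤ) / (cross u v : ℤ)
  set y : ℝ := (cross u w : ℤ) / (cross u v : ℤ)
  have hw_eq : latticeEmbed w = x • latticeEmbed u + y • latticeEmbed v := by
    have hd' : ((cross u v : ℤ) : ℝ) ≠ 0 := by exact_mod_cast hd
    have := cross_smul (latticeEmbed u) (latticeEmbed v) (latticeEmbed w)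
    simp only [cross_latticeEmbed] at this
    rw [← inv_smul_smul₀ hd' (latticeEmbed w), this]
    simp only [x, y, smul_add, smul_smul, div_eq_inv_mul]
  have hz : latticeEmbed (w - ⌊x⌋ • u - ⌊y⌋ • v) =
      Int.fract x • latticeEmbed u + Int.fract y • latticeEmbed v := by
    rw [latticeEmbed_sub, latticeEmbed_sub, latticeEmbed_zsmul, latticeEmbed_zsmul, hw_eq,
      ← Int.self_sub_floor, ← Int.self_sub_floor]
    module
  refine ⟨_, _, _, ⟨Int.fract_nonneg x, Int.fract_lt_one x⟩,
    ⟨Int.fract_nonneg y, Int.fract_lt_one y⟩, ?_, hz⟩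
  by_contra! hfract
  rw [hfract.1, hfract.2, zero_smul, zero_smul, add_zero, latticeEmbed_eq_zero,
    sub_sub, sub_eq_zero] at hz
  exact hw (hz ▸ Submodule.mem_span_pair.2 ⟨_, _, rfl⟩)

theorem exists_latticeEmbed_eq_of_not_isUnit_cross {u v : ℤ × ℤ} (hd : cross u v ≠ 0)
    (hunit : ¬IsUnit (cross u v)) :
    ∃ z : ℤ × ℤ, ∃ p ∈ stdTriangle \ {0, (1, 0), (0, 1)},
      latticeEmbed z = p.1 • latticeEmbed u + p.2 • latticeEmbed v := by
  obtain ⟨w, hw⟩ := SetLike.exists_not_mem_of_ne_top _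
    (mt isUnit_cross_of_span_eq_top hunit)
  obtain ⟨z, s, t, ⟨hs₀, hs₁⟩, ⟨ht₀, ht₁⟩, hst, hz⟩ :=
    exists_latticeEmbed_eq_fract_smul_add_fract_smul hd hw
  rcases le_or_gt (s + t) 1 with hle | hgt
  · refine ⟨z, (s, t), ⟨⟨hs₀, ht₀, hle⟩, ?_⟩, hz⟩
    simp only [Set.mem_insert_iff, Set.mem_singleton_iff, Prod.ext_iff, Prod.fst_zero,
      Prod.snd_zero]
    rcases hst with h | h <;> grind
  -- the point reflection `q ↦ u + v - q` swaps the two halves of the parallelogram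
  · refine ⟨u + v - z, (1 - s, 1 - t), ⟨⟨by linarith, by linarith, by linarith⟩, ?_⟩, ?_⟩
    · simp only [Set.mem_insert_iff, Set.mem_singleton_iff, Prod.ext_iff, Prod.fst_zero,
        Prod.snd_zero]
      grind
    · rw [latticeEmbed_sub, latticeEmbed_add, hz]
      module

theorem isUnit_cross_of_forall_latticePoint_mem_convexHull {a u v : ℤ × ℤ}
    (hlin : LinearIndependent ℝ ![latticeEmbed u, latticeEmbed v])
    (hprim : ∀ p : ℝ × ℝ, IsLatticePoint p →
      p ∈ convexHull ℝ {latticeEmbed a, latticeEmbed a + latticeEmbed u,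
        latticeEmbed a + latticeEmbed v} →
      p = latticeEmbed a ∨ p = latticeEmbed a + latticeEmbed u ∨
        p = latticeEmbed a + latticeEmbed v) :
    IsUnit (cross u v) := by
  by_contra hunit
  have hd : cross u v ≠ 0 := by
    exact_mod_cast cross_latticeEmbed u v ▸ cross_ne_zero_of_linearIndependent hlin
  obtain ⟨z, p, ⟨hp, hpv⟩, hz⟩ := exists_latticeEmbed_eq_of_not_isUnit_cross hd hunit
  have hLp : latticeEmbed (a + z) =
      latticeEmbed a +ᵥ pairCombination ℝ (latticeEmbed u) (latticeEmbed v) p := by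
    rw [latticeEmbed_add, hz]; rfl
  have hmem : latticeEmbed (a + z) ∈ convexHull ℝ
      {latticeEmbed a, latticeEmbed a + latticeEmbed u, latticeEmbed a + latticeEmbed v} := by
    rw [convexHull_triangle_eq, hLp]
    exact Set.vadd_mem_vadd_set (Set.mem_image_of_mem _ hp)
  have hvertex : latticeEmbed (a + z) ∈ latticeEmbed a +ᵥ
      pairCombination ℝ (latticeEmbed u) (latticeEmbed v) '' {0, (1, 0), (0, 1)} := by
    rw [vadd_image_pairCombination_vertices]
    simpa only [Set.mem_insert_iff, Set.mem_singleton_iff]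
      using hprim _ (isLatticePoint_latticeEmbed _) hmem
  rw [hLp, Set.vadd_mem_vadd_set_iff, (pairCombination_injective hlin).mem_set_image] at hvertex
  exact hpv hvertex

/-- A primitive lattice triangle has area `1/2`. -/
theorem primitive_lattice_triangle_area (a b c : ℤ × ℤ)
    (hindep : AffineIndependent ℝ ![latticeEmbed a, latticeEmbed b, latticeEmbed c])
    (hprim : ∀ p : ℝ × ℝ, IsLatticePoint p →
      p ∈ convexHull ℝ ({latticeEmbed a, latticeEmbed b, latticeEmbed c} : Set (ℝ × ℝ)) →
      p = latticeEmbed a ∨ p = latticeEmbed b ∨ p = latticeEmbed c) :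
    (volume (convexHull ℝ ({latticeEmbed a, latticeEmbed b, latticeEmbed c} : Set (ℝ × ℝ)))).toReal
      = 1 / 2 := by
  obtain ⟨u, rfl⟩ : ∃ u, b = a + u := ⟨b - a, by abel⟩
  obtain ⟨v, rfl⟩ : ∃ v, c = a + v := ⟨c - a, by abel⟩
  simp only [latticeEmbed_add] at hindep hprim ⊢
  have hlin := hindep.linearIndependent_sub
  simp only [add_sub_cancel_left] at hlin
  have hunit := isUnit_cross_of_forall_latticePoint_mem_convexHull hlin hprim
  rw [volume_convexHull_triangle, cross_latticeEmbed, ← Int.cast_abs,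
    Int.isUnit_iff_abs_eq.1 hunit]
  norm_num
end

section
/- Upper bound of Theorem 2 (via Pick's theorem): Let P be a finite set of n points of the integer lattice ℤ² in the plane, not all collinear, and let K ⊆ ℝ² be the convex hull (over ℝ) of P. Let h_b(P) denote the number of integer lattice points not belonging to P that lie on the topological frontier of K, and let h_i(P) denote the number of integer lattice points not belonging to P that lie in the topological interior of K. Let M ⊆ ℝ² be a compact set with M ⊆ K such that every point of P lies on the topological frontier of M, and such that Pick's formula holds for M, i.e., the two-dimensional Lebesgue measure of M equals b(M)/2 + i(M) − 1, where b(M) is the number of integer lattice points on the frontier of M and i(M) is the number of integer lattice points in the interior of M. Then the two-dimensional Lebesgue measure of M is at most n/2 + h_b(P)/2 + h_i(P) − 1. -/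
/-!
As `K` is closed, every lattice point on the frontier of `M` lies in `K`, so it is a point of
`P`, a lattice point of the frontier of `K` outside `P`, or a lattice point of the interior of
`K` outside `P`. The lattice points of the interior of `M` are of the last kind too, and are
distinct from those on the frontier of `M`. Counting frontier points of `M` with weight `1/2`
and interior points with weight `1` therefore gives at most `n/2 + h_b/2 + h_i`, and Pick's
formula turns this count into the area.
-/

open MeasureTheory

open Set Topology

lemma latticeEmbed_injective : Function.Injective latticeEmbed := by
  rintro ⟨a, b⟩ ⟨c, d⟩ h
  simp only [latticeEmbed, Prod.mk.injEq, Int.cast_inj] at h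
  rw [h.1, h.2]

lemma isClosedEmbedding_latticeEmbed : IsClosedEmbedding latticeEmbed :=
  Int.isClosedEmbedding_coe_real.prodMap Int.isClosedEmbedding_coe_real

lemma Bornology.IsBounded.finite_setOf_isLatticePoint {s : Set (ℝ × ℝ)}
    (hs : Bornology.IsBounded s) : {p | IsLatticePoint p ∧ p ∈ s}.Finite := by
  have hfin : (latticeEmbed ⁻¹' closure s).Finite :=
    (isClosedEmbedding_latticeEmbed.isCompact_preimage hs.isCompact_closure).finite_of_discrete
  refine (hfin.image latticeEmbed).subset ?_
  rintro _ ⟨⟨a, b, rfl⟩, hp⟩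
  exact ⟨(a, b), subset_closure hp, rfl⟩

theorem ncard_frontier_add_two_mul_ncard_interior_le {X : Type*} [TopologicalSpace X]
    {L M K Q : Set X} (hK : IsClosed K) (hMK : M ⊆ K) (hQM : Q ⊆ frontier M) (hQ : Q.Finite)
    (hLK : (L ∩ K).Finite) :
    (L ∩ frontier M).ncard + 2 * (L ∩ interior M).ncard ≤
      Q.ncard + (L \ Q ∩ frontier K).ncard + 2 * (L \ Q ∩ interior K).ncard := by
  set F := L ∩ frontier M
  set I := L ∩ interior M
  set Hb := L \ Q ∩ frontier K
  set Hi := L \ Q ∩ interior K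
  have hHbfin : Hb.Finite := hLK.subset fun x hx => ⟨hx.1.1, hK.frontier_subset hx.2⟩
  have hHifin : Hi.Finite := hLK.subset fun x hx => ⟨hx.1.1, interior_subset hx.2⟩
  have hFK : frontier M ⊆ K := frontier_subset_closure.trans (closure_minimal hMK hK)
  have hF : F ⊆ Q ∪ Hb ∪ F ∩ Hi := by
    intro x hx
    by_cases hxQ : x ∈ Q
    · exact Or.inl (Or.inl hxQ)
    by_cases hxK : x ∈ interior K
    · exact Or.inr ⟨hx, ⟨hx.1, hxQ⟩, hxK⟩
    · exact Or.inl (Or.inr ⟨⟨hx.1, hxQ⟩, hK.frontier_eq ▸ ⟨hFK hx.2, hxK⟩⟩)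
  have hIHi : I ⊆ Hi := fun x hx =>
    ⟨⟨hx.1, fun hxQ => disjoint_interior_frontier.notMem_of_mem_left hx.2 (hQM hxQ)⟩,
      interior_mono hMK hx.2⟩
  have hFI : Disjoint (F ∩ Hi) I :=
    (disjoint_interior_frontier.symm.mono inter_subset_right inter_subset_right).mono_left
      inter_subset_left
  have hF_le : F.ncard ≤ Q.ncard + Hb.ncard + (F ∩ Hi).ncard :=
    (ncard_le_ncard hF ((hQ.union hHbfin).union (hHifin.subset inter_subset_right))).trans
      ((ncard_union_le _ _).trans (Nat.add_le_add_right (ncard_union_le _ _) _))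
  have hHi_ge : (F ∩ Hi).ncard + I.ncard ≤ Hi.ncard := by
    rw [← ncard_union_eq hFI (hHifin.subset inter_subset_right) (hHifin.subset hIHi)]
    exact ncard_le_ncard (union_subset inter_subset_right hIHi) hHifin
  omega

theorem area_upper_bound_of_pick_general (P : Finset (ℤ × ℤ)) (n : ℕ) (hn : P.card = n)
    (K : Set (ℝ × ℝ)) (hK : K = convexHull ℝ (↑(P.image latticeEmbed) : Set (ℝ × ℝ)))
    (M : Set (ℝ × ℝ)) (hMK : M ⊆ K)
    (hPfr : ∀ p ∈ P, latticeEmbed p ∈ frontier M)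
    (hpick : (volume M).toReal =
      ({p : ℝ × ℝ | IsLatticePoint p ∧ p ∈ frontier M}.ncard : ℝ) / 2 +
      ({p : ℝ × ℝ | IsLatticePoint p ∧ p ∈ interior M}.ncard : ℝ) - 1) :
    (volume M).toReal ≤ (n : ℝ) / 2 +
      ({p : ℝ × ℝ | IsLatticePoint p ∧ p ∉ ↑(P.image latticeEmbed) ∧ p ∈ frontier K}.ncard : ℝ) / 2 +
      ({p : ℝ × ℝ | IsLatticePoint p ∧ p ∉ ↑(P.image latticeEmbed) ∧ p ∈ interior K}.ncard : ℝ) - 1 := by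
  set Q : Set (ℝ × ℝ) := ↑(P.image latticeEmbed)
  have hKcpt : IsCompact K := hK ▸ (P.image latticeEmbed).finite_toSet.isCompact_convexHull ℝ
  have hQM : Q ⊆ frontier M := by
    simp only [Q, Finset.coe_image, image_subset_iff]
    exact hPfr
  have hQcard : Q.ncard = n := by
    rw [ncard_coe_finset, Finset.card_image_of_injective _ latticeEmbed_injective, hn]
  have hcount := ncard_frontier_add_two_mul_ncard_interior_le (L := {p | IsLatticePoint p})
    hKcpt.isClosed hMK hQM (Finset.finite_toSet _) hKcpt.isBounded.finite_setOf_isLatticePoint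
  have hdiff (s : Set (ℝ × ℝ)) :
      {p | IsLatticePoint p ∧ p ∉ P.image latticeEmbed ∧ p ∈ s} = {p | IsLatticePoint p} \ Q ∩ s :=
    ext fun _ => and_assoc.symm
  have hinter (s : Set (ℝ × ℝ)) :
      {p | IsLatticePoint p ∧ p ∈ s} = {p | IsLatticePoint p} ∩ s := rfl
  rw [hpick, hdiff, hdiff, hinter, hinter, ← hQcard]
  have hcount_real := (Nat.cast_le (α := ℝ)).mpr hcount
  push_cast at hcount_real
  linarith

/-- **Upper bound of Theorem 2 (via Pick's theorem).** -/
theorem area_upper_bound_of_pick (P : Finset (ℤ × ℤ)) (n : ℕ) (hn : P.card = n)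
    (hncol : ¬ Collinear ℝ (↑(P.image latticeEmbed) : Set (ℝ × ℝ)))
    (K : Set (ℝ × ℝ)) (hK : K = convexHull ℝ (↑(P.image latticeEmbed) : Set (ℝ × ℝ)))
    (M : Set (ℝ × ℝ)) (hMK : M ⊆ K) (hM : IsCompact M)
    (hPfr : ∀ p ∈ P, latticeEmbed p ∈ frontier M)
    (hpick : (volume M).toReal =
      ({p : ℝ × ℝ | IsLatticePoint p ∧ p ∈ frontier M}.ncard : ℝ) / 2 +
      ({p : ℝ × ℝ | IsLatticePoint p ∧ p ∈ interior M}.ncard : ℝ) - 1) :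
    (volume M).toReal ≤ (n : ℝ) / 2 +
      ({p : ℝ × ℝ | IsLatticePoint p ∧ p ∉ ↑(P.image latticeEmbed) ∧ p ∈ frontier K}.ncard : ℝ) / 2 +
      ({p : ℝ × ℝ | IsLatticePoint p ∧ p ∉ ↑(P.image latticeEmbed) ∧ p ∈ interior K}.ncard : ℝ) - 1 :=
  area_upper_bound_of_pick_general P n hn K hK M hMK hPfr hpick
end

section
/- Half-integrality of lattice-polygon areas: Let S be a finite set of points of the integer lattice ℤ² in the plane, and let K ⊆ ℝ² be the convex hull (over ℝ) of S. Then twice the two-dimensional Lebesgue measure of K is an integer (i.e., the area of K is an integer multiple of 1/2). -/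
/-!
Points of `S` that are not extreme points of its hull can be discarded (Krein–Milman), so one
may assume that `S` is in convex position. If `S` has at most three points, its hull is a lattice
triangle, whose area is half the absolute value of an integer determinant. Otherwise Radon's
theorem, applied to four points of `S`, yields `a, b ∈ S` such that the line `ab` has points of
`S` strictly on both sides. As `a` and `b` are extreme, this line meets the hull only in the
segment `[a, b]`, so it cuts the hull into the hulls of the points of `S` on either side: two
lattice polygons spanned by fewer points, overlapping in a null set.
-/

open MeasureTheory

open Set
open scoped Pointwise

section Convex

variable {𝕜 E : Type*} [Field 𝕜] [LinearOrder 𝕜] [IsStrictOrderedRing 𝕜] [AddCommGroup E]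
  [Module 𝕜 E]

lemma mem_segment_of_collinear_of_mem_extremePoints {A : Set E} {a b w : E}
    (ha : a ∈ A.extremePoints 𝕜) (hb : b ∈ A.extremePoints 𝕜) (hab : a ≠ b) (hw : w ∈ A)
    (hcol : Collinear 𝕜 {a, b, w}) : w ∈ segment 𝕜 a b := by
  rcases hcol.wbtw_or_wbtw_or_wbtw with h | h | h
  · rcases (mem_extremePoints_iff_forall_segment.1 hb).2 a ha.1 w hw
      (mem_segment_iff_wbtw.2 h) with h' | rfl
    · exact absurd h' hab
    · exact right_mem_segment 𝕜 a w
  · exact segment_symm 𝕜 a b ▸ mem_segment_iff_wbtw.2 h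
  · rcases (mem_extremePoints_iff_forall_segment.1 ha).2 w hw b hb.1
      (mem_segment_iff_wbtw.2 h) with rfl | h'
    · exact left_mem_segment 𝕜 w b
    · exact absurd h'.symm hab

lemma ConvexIndependent.exists_segment_inter_nonempty {f : Fin 4 → E}
    (hc : ConvexIndependent 𝕜 f) (hf : ¬ AffineIndependent 𝕜 f) :
    ∃ i j k l : Fin 4, i ≠ j ∧ k ≠ i ∧ k ≠ j ∧ l ≠ i ∧ l ≠ j ∧
      (segment 𝕜 (f i) (f j) ∩ segment 𝕜 (f k) (f l)).Nonempty := by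
  obtain ⟨I, x, hxI, hxIc⟩ := Convex.radon_partition hf
  have nontrivial : ∀ J : Set (Fin 4), x ∈ convexHull 𝕜 (f '' J) →
      x ∈ convexHull 𝕜 (f '' Jᶜ) → J.Nontrivial := by
    intro J hJ hJc
    by_contra hJ'
    rcases (not_nontrivial_iff.1 hJ').eq_empty_or_singleton with rfl | ⟨i, rfl⟩
    · simp at hJ
    · rw [image_singleton, convexHull_singleton, mem_singleton_iff] at hJ
      subst hJ
      exact (hc.mem_convexHull_iff _ i).1 hJc rfl
  have hI := Set.one_lt_ncard_iff_nontrivial.2 (nontrivial I hxI hxIc)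
  have hIc := Set.one_lt_ncard_iff_nontrivial.2 (nontrivial Iᶜ hxIc (by rwa [compl_compl]))
  have hcard : I.ncard + Iᶜ.ncard = 4 := by rw [Set.ncard_add_ncard_compl]; simp
  obtain ⟨i, j, hij, rfl⟩ := Set.ncard_eq_two.1 (by omega : I.ncard = 2)
  obtain ⟨k, l, -, hkl⟩ := Set.ncard_eq_two.1 (by omega : ({i, j}ᶜ : Set (Fin 4)).ncard = 2)
  have hk : k ∈ ({i, j}ᶜ : Set (Fin 4)) := hkl ▸ mem_insert k {l}
  have hl : l ∈ ({i, j}ᶜ : Set (Fin 4)) := hkl ▸ mem_insert_of_mem k rfl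
  simp only [mem_compl_iff, mem_insert_iff, mem_singleton_iff, not_or] at hk hl
  rw [image_pair, convexHull_pair] at hxI
  rw [hkl, image_pair, convexHull_pair] at hxIc
  exact ⟨i, j, k, l, hij, hk.1, hk.2, hl.1, hl.2, x, hxI, hxIc⟩

lemma mem_convexHull_sep_nonneg {s : Set E} {g : E →ᵃ[𝕜] 𝕜}
    (hg : ∀ w ∈ convexHull 𝕜 s, g w = 0 → w ∈ convexHull 𝕜 {x ∈ s | 0 ≤ g x})
    {x : E} (hx : x ∈ convexHull 𝕜 s) (hgx : 0 ≤ g x) :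
    x ∈ convexHull 𝕜 {x ∈ s | 0 ≤ g x} := by
  set T := {x ∈ s | 0 ≤ g x}
  set U := {x ∈ s | g x < 0}
  have hU : convexHull 𝕜 U ⊆ {x | g x < 0} :=
    convexHull_min (fun x hx => hx.2) ((convex_Iio 0).affine_preimage g)
  have hsTU : s = T ∪ U := by
    ext x; simp only [T, U, mem_union, mem_ofPred_eq, ← and_or_left, le_or_gt, and_true]
  rcases U.eq_empty_or_nonempty with hU₀ | hU₀
  · rwa [hsTU, hU₀, union_empty] at hx
  rcases T.eq_empty_or_nonempty with hT₀ | hT₀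
  · rw [hsTU, hT₀, empty_union] at hx
    exact absurd hgx (hU hx).not_ge
  have hxs := hx
  rw [hsTU, convexHull_union hT₀ hU₀] at hx
  obtain ⟨y, hy, z, hz, hxyz⟩ := mem_convexJoin.1 hx
  have hgz : g z < 0 := hU hz
  -- `w` is the point of `[x, z]` on the line `g = 0`; it lies in the hull of `T`, and `x ∈ [y, w]`
  set t := g x / (g x - g z)
  have ht : t ∈ Icc (0 : 𝕜) 1 :=
    ⟨div_nonneg hgx (by linarith), (div_le_one (by linarith)).2 (by linarith)⟩
  set w := AffineMap.lineMap x z t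
  have hxw : Wbtw 𝕜 x w z := ⟨t, ht, rfl⟩
  have hgw : g w = 0 := by
    rw [AffineMap.apply_lineMap, AffineMap.lineMap_apply_ring']
    simp only [t]
    field_simp [show g x - g z ≠ 0 by linarith]
    ring
  have hw : w ∈ convexHull 𝕜 T :=
    hg w ((convex_convexHull 𝕜 s).segment_subset hxs
      (convexHull_mono (hsTU ▸ subset_union_right) hz) (mem_segment_iff_wbtw.2 hxw)) hgw
  exact (convex_convexHull 𝕜 T).segment_subset hy hw
    (mem_segment_iff_wbtw.2 ((mem_segment_iff_wbtw.1 hxyz).trans_right_left hxw))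

lemma convexHull_eq_union_sep {s : Set E} {g : E →ᵃ[𝕜] 𝕜}
    (hg : ∀ w ∈ convexHull 𝕜 s, g w = 0 → w ∈ convexHull 𝕜 {x ∈ s | g x = 0}) :
    convexHull 𝕜 s = convexHull 𝕜 {x ∈ s | 0 ≤ g x} ∪ convexHull 𝕜 {x ∈ s | g x ≤ 0} := by
  refine (union_subset (convexHull_mono (sep_subset _ _))
    (convexHull_mono (sep_subset _ _))).antisymm' ?_
  intro x hx
  rcases le_total 0 (g x) with hgx | hgx
  · refine Or.inl (mem_convexHull_sep_nonneg (fun w hw hgw => ?_) hx hgx)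
    exact convexHull_mono (fun y hy => ⟨hy.1, hy.2.ge⟩ : {x ∈ s | g x = 0} ⊆ {x ∈ s | 0 ≤ g x})
      (hg w hw hgw)
  · have hsep : ∀ t : Set E, {x ∈ t | 0 ≤ (-g) x} = {x ∈ t | g x ≤ 0} := by simp
    refine Or.inr (hsep s ▸ mem_convexHull_sep_nonneg (fun w hw hgw => ?_) hx (by simpa using hgx))
    rw [hsep]
    exact convexHull_mono (fun y hy => ⟨hy.1, hy.2.le⟩ : {x ∈ s | g x = 0} ⊆ {x ∈ s | g x ≤ 0})
      (hg w hw (by simpa using hgw))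

end Convex

lemma convexHull_erase_of_notMem_extremePoints {E : Type*} [NormedAddCommGroup E]
    [NormedSpace ℝ E] [DecidableEq E] {S : Finset E}
    {d : E} (hd : d ∉ (convexHull ℝ (S : Set E)).extremePoints ℝ) :
    convexHull ℝ (S.erase d : Set E) = convexHull ℝ (S : Set E) := by
  refine (convexHull_mono (S.erase_subset d)).antisymm ?_
  have hcompact := (S.finite_toSet).isCompact_convexHull ℝ
  rw [← closure_convexHull_extremePoints hcompact (convex_convexHull ℝ _)]
  refine closure_minimal (convexHull_mono fun x hx => ?_)
    ((S.erase d).finite_toSet.isCompact_convexHull ℝ).isClosed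
  exact Finset.mem_erase.2 ⟨fun h => hd (h ▸ hx), extremePoints_convexHull_subset hx⟩

lemma MeasureTheory.Measure.addHaar_line_eq_zero {E : Type*} [NormedAddCommGroup E]
    [NormedSpace ℝ E] [MeasurableSpace E] [BorelSpace E] [FiniteDimensional ℝ E] (μ : Measure E)
    [μ.IsAddHaarMeasure] (hE : 1 < Module.finrank ℝ E) (a b : E) :
    μ (line[ℝ, a, b] : Set E) = 0 := by
  refine Measure.addHaar_affineSubspace μ _ fun htop => ?_
  have hspan : ℝ ∙ (a -ᵥ b) = ⊤ := by
    rw [← vectorSpan_pair, ← direction_affineSpan, htop, AffineSubspace.direction_top]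
  have : Module.finrank ℝ (ℝ ∙ (a -ᵥ b)) ≤ 1 := (finrank_span_le_card _).trans (by simp)
  rw [hspan, finrank_top] at this
  omega

lemma Finset.Nonempty.exists_coe_eq_triple {α : Type*} {S : Finset α} (hS : S.Nonempty)
    (hcard : S.card ≤ 3) : ∃ a ∈ S, ∃ b ∈ S, ∃ c ∈ S, (S : Set α) = {a, b, c} := by
  classical
  obtain h | h | h : S.card = 1 ∨ S.card = 2 ∨ S.card = 3 := by
    have := hS.card_pos; omega
  · obtain ⟨a, rfl⟩ := Finset.card_eq_one.1 h
    exact ⟨a, by simp, a, by simp, a, by simp, by simp⟩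
  · obtain ⟨a, b, -, rfl⟩ := Finset.card_eq_two.1 h
    exact ⟨a, by simp, b, by simp, b, by simp, by simp⟩
  · obtain ⟨a, b, c, -, -, -, rfl⟩ := Finset.card_eq_three.1 h
    exact ⟨a, by simp, b, by simp, c, by simp, by simp⟩

/-- Twice the signed area of the triangle `a b x`: its sign tells on which side of the line `ab`
the point `x` lies. -/
def lineSide (a b : ℝ × ℝ) : (ℝ × ℝ) →ᵃ[ℝ] ℝ where
  toFun x := (b.1 - a.1) * (x.2 - a.2) - (b.2 - a.2) * (x.1 - a.1)
  linear := (b.1 - a.1) • LinearMap.snd ℝ ℝ ℝ - (b.2 - a.2) • LinearMap.fst ℝ ℝ ℝ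
  map_vadd' x v := by
    simp only [vadd_eq_add, Prod.fst_add, Prod.snd_add, LinearMap.sub_apply,
      LinearMap.smul_apply, LinearMap.fst_apply, LinearMap.snd_apply, smul_eq_mul]
    ring

lemma lineSide_apply (a b x : ℝ × ℝ) :
    lineSide a b x = (b.1 - a.1) * (x.2 - a.2) - (b.2 - a.2) * (x.1 - a.1) := rfl

@[simp]
lemma lineSide_apply_left (a b : ℝ × ℝ) : lineSide a b a = 0 := by
  rw [lineSide_apply]; ring

@[simp]
lemma lineSide_apply_right (a b : ℝ × ℝ) : lineSide a b b = 0 := by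
  rw [lineSide_apply]; ring

lemma collinear_of_lineSide_eq_zero {a b x : ℝ × ℝ} (hab : a ≠ b) (hx : lineSide a b x = 0) :
    Collinear ℝ {a, b, x} := by
  have hN : (b.1 - a.1) ^ 2 + (b.2 - a.2) ^ 2 ≠ 0 := by
    contrapose! hab
    ext <;> nlinarith [sq_nonneg (b.1 - a.1), sq_nonneg (b.2 - a.2)]
  rw [collinear_iff_of_mem (mem_insert a _)]
  refine ⟨b - a, ?_⟩
  simp only [mem_insert_iff, mem_singleton_iff, forall_eq_or_imp, forall_eq, vadd_eq_add]
  refine ⟨⟨0, by simp⟩, ⟨1, by simp⟩,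
    ⟨((x.1 - a.1) * (b.1 - a.1) + (x.2 - a.2) * (b.2 - a.2)) /
      ((b.1 - a.1) ^ 2 + (b.2 - a.2) ^ 2), ?_⟩⟩
  rw [lineSide_apply] at hx
  ext <;> simp only [Prod.fst_add, Prod.snd_add, Prod.smul_fst, Prod.smul_snd, Prod.fst_sub,
    Prod.snd_sub, smul_eq_mul] <;> field_simp
  · linear_combination (a.2 - b.2) * hx
  · linear_combination (b.1 - a.1) * hx

lemma volume_setOf_lineSide_eq_zero {a b : ℝ × ℝ} (hab : a ≠ b) :
    volume {x | lineSide a b x = 0} = 0 :=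
  measure_mono_null (fun x hx => (collinear_of_lineSide_eq_zero hab hx).mem_affineSpan_of_mem_of_ne
      (by simp) (by simp) (by simp) hab)
    (Measure.addHaar_line_eq_zero volume (by simp) a b)

def unitTriangle : Set (ℝ × ℝ) := {p | 0 ≤ p.1 ∧ 0 ≤ p.2 ∧ p.1 + p.2 ≤ 1}

lemma convexHull_vertices_eq_unitTriangle :
    convexHull ℝ {0, (1, 0), (0, 1)} = unitTriangle := by
  refine (convexHull_min ?_ ?_).antisymm fun p ⟨h₁, h₂, h₁₂⟩ => ?_
  · simp [insert_subset_iff, unitTriangle]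
  · rintro p ⟨hp₁, hp₂, hp₁₂⟩ q ⟨hq₁, hq₂, hq₁₂⟩ s t hs ht hst
    simp only [unitTriangle, mem_ofPred_eq, Prod.fst_add, Prod.snd_add, Prod.smul_fst,
      Prod.smul_snd, smul_eq_mul]
    refine ⟨by positivity, by positivity, by nlinarith⟩
  · refine mem_convexHull_of_exists_fintype ![1 - p.1 - p.2, p.1, p.2] ![0, (1, 0), (0, 1)]
      ?_ ?_ ?_ ?_
    · intro i; fin_cases i <;> simp <;> linarith
    · simp [Fin.sum_univ_three]; ring
    · intro i; fin_cases i <;> simp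
    · ext <;> simp [Fin.sum_univ_three]

lemma volume_unitTriangle : volume unitTriangle = 2⁻¹ := by
  -- the unit square is the union of `unitTriangle` and its image `T'` under `p ↦ 1 - p`
  set T' := (fun p => p + -1) ⁻¹' (-unitTriangle)
  have hT' : volume T' = volume unitTriangle := by
    rw [measure_preimage_add_right, Measure.measure_neg]
  have hmeas : MeasurableSet unitTriangle := by
    rw [← convexHull_vertices_eq_unitTriangle]
    exact ((toFinite _).isCompact_convexHull ℝ).isClosed.measurableSet
  have hsquare : Icc (0 : ℝ) 1 ×ˢ Icc (0 : ℝ) 1 = T' ∪ unitTriangle := by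
    ext p
    simp only [T', unitTriangle, mem_prod, mem_Icc, mem_union, mem_preimage, Set.mem_neg,
      mem_ofPred_eq, Prod.fst_add, Prod.snd_add, Prod.fst_neg, Prod.snd_neg, Prod.fst_one,
      Prod.snd_one]
    constructor
    · rintro ⟨⟨h₁, h₁'⟩, h₂, h₂'⟩
      by_cases h : p.1 + p.2 ≤ 1
      · exact Or.inr ⟨h₁, h₂, h⟩
      · exact Or.inl ⟨by linarith, by linarith, by linarith⟩
    · rintro (⟨h₁, h₂, h₁₂⟩ | ⟨h₁, h₂, h₁₂⟩) <;> refine ⟨⟨?_, ?_⟩, ?_, ?_⟩ <;> linarith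
  have hdisj : T' ∩ unitTriangle ⊆ {x | lineSide (1, 0) (0, 1) x = 0} := by
    rintro p ⟨⟨-, -, h⟩, -, -, h'⟩
    simp only [Prod.fst_add, Prod.snd_add, Prod.fst_neg, Prod.snd_neg, Prod.fst_one,
      Prod.snd_one] at h
    simp only [mem_ofPred_eq, lineSide_apply]
    linarith
  have hunion := measure_union₀ hmeas.nullMeasurableSet
    (measure_mono_null hdisj (volume_setOf_lineSide_eq_zero (by simp)))
  rw [← hsquare, hT', Measure.volume_eq_prod, Measure.prod_prod, Real.volume_Icc,
    ← Measure.volume_eq_prod, ← two_mul] at hunion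
  refine ENNReal.eq_inv_of_mul_eq_one_left ?_
  simpa [mul_comm] using hunion.symm

lemma volume_convexHull_triple (a b c : ℝ × ℝ) :
    volume (convexHull ℝ {a, b, c}) = ENNReal.ofReal (|lineSide a b c| / 2) := by
  let M : (ℝ × ℝ) →ₗ[ℝ] ℝ × ℝ :=
    (LinearMap.fst ℝ ℝ ℝ).smulRight (b - a) + (LinearMap.snd ℝ ℝ ℝ).smulRight (c - a)
  have hdet : LinearMap.det M = lineSide a b c := by
    rw [← LinearMap.det_toMatrix (Module.Basis.finTwoProd ℝ), Matrix.det_fin_two]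
    simp [LinearMap.toMatrix_apply, M, lineSide_apply]
    ring
  have hhull : convexHull ℝ {a, b, c} = a +ᵥ M '' unitTriangle := by
    rw [← convexHull_vertices_eq_unitTriangle, M.image_convexHull, ← convexHull_vadd]
    simp [M, image_insert_eq, vadd_set_insert]
  rw [hhull, measure_vadd, Measure.addHaar_image_linearMap, hdet, volume_unitTriangle,
    ENNReal.ofReal_div_of_pos two_pos, div_eq_mul_inv, ENNReal.ofReal_ofNat]

lemma lineSide_ne_zero_of_mem_extremePoints {A : Set (ℝ × ℝ)} {a b c : ℝ × ℝ}
    (ha : a ∈ A.extremePoints ℝ) (hb : b ∈ A.extremePoints ℝ) (hc : c ∈ A.extremePoints ℝ)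
    (hab : a ≠ b) (hca : c ≠ a) (hcb : c ≠ b) : lineSide a b c ≠ 0 := fun h =>
  ((mem_extremePoints_iff_forall_segment.1 hc).2 a ha.1 b hb.1
    (mem_segment_of_collinear_of_mem_extremePoints ha hb hab hc.1
      (collinear_of_lineSide_eq_zero hab h))).elim (fun h => hca h.symm) (fun h => hcb h.symm)

lemma exists_lineSide_neg_pos {S : Finset (ℝ × ℝ)}
    (hS : ↑S ⊆ (convexHull ℝ (S : Set (ℝ × ℝ))).extremePoints ℝ) (hcard : 4 ≤ S.card) :
    ∃ a ∈ S, ∃ b ∈ S, a ≠ b ∧ (∃ c ∈ S, lineSide a b c < 0) ∧ ∃ d ∈ S, 0 < lineSide a b d := by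
  let f : Fin 4 → ℝ × ℝ := fun i => S.equivFin.symm (Fin.castLE hcard i)
  have hfS : ∀ i, f i ∈ S := fun i => (S.equivFin.symm _).2
  have hf : ConvexIndependent ℝ f :=
    ((convex_convexHull ℝ _).convexIndependent_extremePoints.mono hS).comp_embedding
      ((Fin.castLEEmb hcard).trans S.equivFin.symm.toEmbedding)
  have hf' : ¬ AffineIndependent ℝ f := fun h => by
    have := h.card_le_finrank_succ
    have := Submodule.finrank_le (vectorSpan ℝ (range f))
    simp only [Fintype.card_fin, Module.finrank_prod, Module.finrank_self] at *
    omega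
  obtain ⟨i, j, k, l, hij, hki, hkj, hli, hlj, x, hxij, hxkl⟩ :=
    hf.exists_segment_inter_nonempty hf'
  set g := lineSide (f i) (f j)
  have hext : ∀ m, f m ∈ (convexHull ℝ (S : Set (ℝ × ℝ))).extremePoints ℝ := fun m => hS (hfS m)
  have hgk := lineSide_ne_zero_of_mem_extremePoints (hext i) (hext j) (hext k)
    (hf.injective.ne hij) (hf.injective.ne hki) (hf.injective.ne hkj)
  have hgl := lineSide_ne_zero_of_mem_extremePoints (hext i) (hext j) (hext l)
    (hf.injective.ne hij) (hf.injective.ne hli) (hf.injective.ne hlj)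
  have hgx : g x = 0 := by
    simpa [g, image_segment, segment_eq_uIcc] using mem_image_of_mem g hxij
  have hgx' : g x ∈ uIcc (g (f k)) (g (f l)) := by
    simpa [image_segment, segment_eq_uIcc] using mem_image_of_mem g hxkl
  refine ⟨f i, hfS i, f j, hfS j, hf.injective.ne hij, ?_⟩
  rw [hgx, mem_uIcc] at hgx'
  rcases hgx' with ⟨h₁, h₂⟩ | ⟨h₁, h₂⟩
  · exact ⟨⟨f k, hfS k, lt_of_le_of_ne h₁ hgk⟩, f l, hfS l, lt_of_le_of_ne h₂ hgl.symm⟩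
  · exact ⟨⟨f l, hfS l, lt_of_le_of_ne h₁ hgl⟩, f k, hfS k, lt_of_le_of_ne h₂ hgk.symm⟩

lemma volume_convexHull_eq_add_of_subset_extremePoints {S : Finset (ℝ × ℝ)}
    (hS : ↑S ⊆ (convexHull ℝ (S : Set (ℝ × ℝ))).extremePoints ℝ) {a b : ℝ × ℝ}
    (ha : a ∈ S) (hb : b ∈ S) (hab : a ≠ b) :
    volume (convexHull ℝ (S : Set (ℝ × ℝ))) =
      volume (convexHull ℝ (S.filter (0 ≤ lineSide a b ·) : Set (ℝ × ℝ))) +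
        volume (convexHull ℝ (S.filter (lineSide a b · ≤ 0) : Set (ℝ × ℝ))) := by
  set g := lineSide a b
  have hchord : ∀ w ∈ convexHull ℝ (S : Set (ℝ × ℝ)), g w = 0 →
      w ∈ convexHull ℝ {x ∈ (S : Set (ℝ × ℝ)) | g x = 0} := by
    intro w hw hgw
    have hw' := mem_segment_of_collinear_of_mem_extremePoints (hS ha) (hS hb) hab hw
      (collinear_of_lineSide_eq_zero hab hgw)
    rw [← convexHull_pair] at hw'
    refine convexHull_mono ?_ hw'
    simp [insert_subset_iff, ha, hb, g]
  rw [Finset.coe_filter, Finset.coe_filter, convexHull_eq_union_sep hchord]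
  refine measure_union₀
    ((toFinite _).isCompact_convexHull ℝ).isClosed.measurableSet.nullMeasurableSet ?_
  refine measure_mono_null (fun x ⟨hx₁, hx₂⟩ => le_antisymm ?_ ?_)
    (volume_setOf_lineSide_eq_zero hab)
  · exact convexHull_min (fun y hy => hy.2) ((convex_Iic 0).affine_preimage g) hx₂
  · exact convexHull_min (fun y hy => hy.2) ((convex_Ici 0).affine_preimage g) hx₁

lemma two_mul_volume_convexHull_latticeEmbed_triple (p q r : ℤ × ℤ) :
    2 * (volume (convexHull ℝ {latticeEmbed p, latticeEmbed q, latticeEmbed r})).toReal =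
      ((|(q.1 - p.1) * (r.2 - p.2) - (q.2 - p.2) * (r.1 - p.1)| : ℤ) : ℝ) := by
  rw [volume_convexHull_triple, ENNReal.toReal_ofReal (by positivity)]
  simp only [latticeEmbed, lineSide_apply, Int.cast_abs, Int.cast_sub, Int.cast_mul]
  ring

theorem exists_int_two_mul_volume_convexHull_eq {S : Finset (ℝ × ℝ)}
    (hS : ↑S ⊆ range latticeEmbed) :
    ∃ m : ℤ, 2 * (volume (convexHull ℝ (S : Set (ℝ × ℝ)))).toReal = m := by
  induction S using Finset.strongInduction with
  | H S ih =>
  have hfin : ∀ T : Finset (ℝ × ℝ), volume (convexHull ℝ (T : Set (ℝ × ℝ))) ≠ ⊤ :=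
    fun T => (T.finite_toSet.isCompact_convexHull ℝ).measure_lt_top.ne
  rcases S.eq_empty_or_nonempty with rfl | hne
  · exact ⟨0, by simp⟩
  by_cases hcard : S.card ≤ 3
  · obtain ⟨a, ha, b, hb, c, hc, hS'⟩ := hne.exists_coe_eq_triple hcard
    obtain ⟨p, rfl⟩ := hS ha
    obtain ⟨q, rfl⟩ := hS hb
    obtain ⟨r, rfl⟩ := hS hc
    exact ⟨_, hS' ▸ two_mul_volume_convexHull_latticeEmbed_triple p q r⟩
  by_cases hext : ↑S ⊆ (convexHull ℝ (S : Set (ℝ × ℝ))).extremePoints ℝ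
  · obtain ⟨a, ha, b, hb, hab, ⟨c, hc, hgc⟩, d, hd, hgd⟩ :=
      exists_lineSide_neg_pos hext (by omega)
    obtain ⟨m₁, hm₁⟩ := ih (S.filter (0 ≤ lineSide a b ·))
      (Finset.filter_ssubset.2 ⟨c, hc, hgc.not_ge⟩)
      ((Finset.coe_subset.2 (Finset.filter_subset _ _)).trans hS)
    obtain ⟨m₂, hm₂⟩ := ih (S.filter (lineSide a b · ≤ 0))
      (Finset.filter_ssubset.2 ⟨d, hd, hgd.not_ge⟩)
      ((Finset.coe_subset.2 (Finset.filter_subset _ _)).trans hS)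
    refine ⟨m₁ + m₂, ?_⟩
    rw [volume_convexHull_eq_add_of_subset_extremePoints hext ha hb hab,
      ENNReal.toReal_add (hfin _) (hfin _), Int.cast_add, ← hm₁, ← hm₂, mul_add]
  · obtain ⟨d, hd, hd'⟩ := not_subset.1 hext
    rw [← convexHull_erase_of_notMem_extremePoints hd']
    exact ih _ (Finset.erase_ssubset hd) ((Finset.coe_subset.2 (S.erase_subset d)).trans hS)

/-- **Half-integrality of lattice-polygon areas:** twice the area of the convex hull
of a finite set of lattice points is an integer. -/
theorem lattice_hull_area_half_integral (S : Finset (ℤ × ℤ))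
    (K : Set (ℝ × ℝ)) (hK : K = convexHull ℝ (↑(S.image latticeEmbed) : Set (ℝ × ℝ))) :
    ∃ m : ℤ, 2 * (volume K).toReal = (m : ℝ) := by
  subst hK
  exact exists_int_two_mul_volume_convexHull_eq (by simp)
end
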